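/- Let u : ℝ × ℝ^m → ℝ be smooth, everywhere positive, ℤ^m-periodic in the spatial variable, with ∂_t u = Δ_x u. Set f = −ln u and E(t) = ∫_{[0,1]^m} |∇f(t,x)|²·u(t,x) dx. Then E is differentiable with E'(t) = −2·∫_{[0,1]^m} |D²f(t,x)|²·u(t,x) dx ≤ 0 for every t; in particular the entropy energy E is non-increasing. -/

import Mathlib

open MeasureTheory
open scoped RealInnerProductSpace

noncomputable section

abbrev E (m : ℕ) := EuclideanSpace ℝ (Fin m)

/-- The standard orthonormal basis of `ℝ^m`. -/
def eE (m : ℕ) (a : Fin m) : E m := EuclideanSpace.single a 1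

/-- Second Fréchet derivative as a bilinear form. -/
def D2E (m : ℕ) (g : E m → ℝ) (x X Y : E m) : ℝ := iteratedFDeriv ℝ 2 g x ![X, Y]

/-- The Laplacian `Δg(x) = Σ_a D²g(x)[e_a, e_a]`. -/
def lapE (m : ℕ) (g : E m → ℝ) (x : E m) : ℝ := ∑ a, D2E m g x (eE m a) (eE m a)

/-- The unit cube `[0,1]^m`. -/
def cube (m : ℕ) : Set (E m) := {x | ∀ i, x i ∈ Set.Icc (0 : ℝ) 1}

/-- The vector of `ℤ^m ⊂ ℝ^m` with integer coordinates `k`. -/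
def latt (m : ℕ) (k : Fin m → ℤ) : E m := WithLp.toLp 2 (fun i => (k i : ℝ))

/-!
With `f = -log u` one has `|∇f|² u = |∇u|²/u`. Differentiating in time, using the heat equation
and the symmetry of the third derivatives of `u`, gives the pointwise identity
`∂ₜ(|∇u|²/u) = div W - 2 |D²f|² u` with `W = 2 D²u ∇u / u - |∇u|² ∇u / u²`. The field `W` is
`ℤ^m`-periodic, so in the divergence theorem on the unit cube the fluxes through opposite faces
cancel and `∫ div W = 0`. Differentiating the energy under the integral sign then gives
`E' = -2 ∫ |D²f|² u ≤ 0`.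
-/

open scoped ContDiff

namespace HeatEntropy

open Set

section DirDeriv

variable {F : Type*} [NormedAddCommGroup F] [NormedSpace ℝ F] {g h : F → ℝ} {z : F}

def dirDeriv (v : F) (g : F → ℝ) : F → ℝ := fun z => fderiv ℝ g z v

theorem contDiff_dirDeriv (hg : ContDiff ℝ ∞ g) (v : F) : ContDiff ℝ ∞ (dirDeriv v g) :=
  (hg.fderiv_right (m := ∞) le_rfl).clm_apply contDiff_const

theorem dirDeriv_dirDeriv (hg : ContDiff ℝ ∞ g) (v w z : F) :
    dirDeriv v (dirDeriv w g) z = fderiv ℝ (fderiv ℝ g) z v w := by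
  have hdg : DifferentiableAt ℝ (fderiv ℝ g) z :=
    ((hg.fderiv_right (m := ∞) le_rfl).differentiable (by simp)).differentiableAt
  change fderiv ℝ (fun y => fderiv ℝ g y w) z v = _
  simp [fderiv_clm_apply hdg (differentiableAt_const w)]

theorem dirDeriv_comm (hg : ContDiff ℝ ∞ g) (v w z : F) :
    dirDeriv v (dirDeriv w g) z = dirDeriv w (dirDeriv v g) z := by
  have h2 : minSmoothness ℝ 2 ≤ ∞ := by simp [minSmoothness_of_isRCLikeNormedField]; decide
  rw [dirDeriv_dirDeriv hg, dirDeriv_dirDeriv hg]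
  exact (hg.contDiffAt.isSymmSndFDerivAt h2).eq v w

theorem iteratedFDeriv_two_eq_dirDeriv (hg : ContDiff ℝ ∞ g) (z v w : F) :
    iteratedFDeriv ℝ 2 g z ![v, w] = dirDeriv v (dirDeriv w g) z := by
  simp [iteratedFDeriv_two_apply, dirDeriv_dirDeriv hg]

theorem hasDerivAt_line_dirDeriv (hg : DifferentiableAt ℝ g z) (v : F) :
    HasDerivAt (fun s : ℝ => g (z + s • v)) (dirDeriv v g z) 0 :=
  hg.hasFDerivAt.hasLineDerivAt v

theorem dirDeriv_eq_of_hasDerivAt_line (hg : DifferentiableAt ℝ g z) {v : F} {d : ℝ}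
    (h : HasDerivAt (fun s : ℝ => g (z + s • v)) d 0) : dirDeriv v g z = d :=
  (hasDerivAt_line_dirDeriv hg v).unique h

theorem dirDeriv_sum {ι : Type*} (s : Finset ι) {f : ι → F → ℝ}
    (hf : ∀ i ∈ s, DifferentiableAt ℝ (f i) z) (v : F) :
    dirDeriv v (fun y => ∑ i ∈ s, f i y) z = ∑ i ∈ s, dirDeriv v (f i) z := by
  simp [dirDeriv, fderiv_fun_sum hf]

theorem dirDeriv_neg_log (hg : DifferentiableAt ℝ g z) (hgz : g z ≠ 0) (v : F) :
    dirDeriv v (fun y => -Real.log (g y)) z = -dirDeriv v g z / g z := by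
  refine dirDeriv_eq_of_hasDerivAt_line (hg.log hgz).neg ?_
  refine (((hasDerivAt_line_dirDeriv hg v).log (by simpa using hgz)).neg).congr_deriv ?_
  simp [neg_div]

theorem dirDeriv_neg_div (hh : DifferentiableAt ℝ h z) (hg : DifferentiableAt ℝ g z)
    (hgz : g z ≠ 0) (v : F) :
    dirDeriv v (fun y => -h y / g y) z =
      -dirDeriv v h z / g z + h z * dirDeriv v g z / g z ^ 2 := by
  have hdiff : DifferentiableAt ℝ (fun y => -h y / g y) z := by fun_prop (disch := exact hgz)
  refine dirDeriv_eq_of_hasDerivAt_line hdiff ?_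
  refine (((hasDerivAt_line_dirDeriv hh v).neg).div (hasDerivAt_line_dirDeriv hg v)
    (by simpa using hgz)).congr_deriv ?_
  simp only [zero_smul, add_zero, neg_mul, Pi.neg_apply, sub_neg_eq_add]
  field_simp

theorem dirDeriv_add_right_eq {c : F} (hc : ∀ y, g (y + c) = g y) (v y : F) :
    dirDeriv v g (y + c) = dirDeriv v g y := by
  simp only [dirDeriv, ← fderiv_comp_add_right, hc]

end DirDeriv

section Slice

variable {F : Type*} [NormedAddCommGroup F] [NormedSpace ℝ F] {G : ℝ × F → ℝ}

theorem fderiv_slice_apply (hG : Differentiable ℝ G) (t : ℝ) (x v : F) :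
    fderiv ℝ (fun y => G (t, y)) x v = dirDeriv (0, v) G (t, x) := by
  have h : HasFDerivAt (fun y => G (t, y)) ((fderiv ℝ G (t, x)).comp (.inr ℝ ℝ F)) x :=
    (hG (t, x)).hasFDerivAt.comp x (hasFDerivAt_prodMk_right t x)
  rw [h.fderiv]
  rfl

theorem hasDerivAt_time_slice (hG : Differentiable ℝ G) (t : ℝ) (x : F) :
    HasDerivAt (fun s => G (s, x)) (dirDeriv (1, 0) G (t, x)) t := by
  simpa [Function.comp_def, dirDeriv] using
    (hG (t, x)).hasFDerivAt.comp_hasDerivAt t ((hasDerivAt_id t).prodMk (hasDerivAt_const t x))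

theorem iteratedFDeriv_two_slice (hG : ContDiff ℝ ∞ G) (t : ℝ) (x v w : F) :
    iteratedFDeriv ℝ 2 (fun y => G (t, y)) x ![v, w] =
      dirDeriv (0, v) (dirDeriv (0, w) G) (t, x) := by
  have hdiff : ∀ {H : ℝ × F → ℝ}, ContDiff ℝ ∞ H → Differentiable ℝ H :=
    fun hH => hH.differentiable (by simp)
  have hGt : ContDiff ℝ ∞ (fun y => G (t, y)) := hG.comp (contDiff_const.prodMk contDiff_id)
  rw [iteratedFDeriv_two_eq_dirDeriv hGt]
  have hslice : dirDeriv w (fun y => G (t, y)) = fun y => dirDeriv (0, w) G (t, y) :=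
    funext fun y => fderiv_slice_apply (hdiff hG) t y w
  rw [hslice]
  exact fderiv_slice_apply (hdiff (contDiff_dirDeriv hG _)) t x v

end Slice

section Euclidean

variable {m : ℕ}

theorem gradient_apply_eq_fderiv (g : E m → ℝ) (x : E m) (a : Fin m) :
    gradient g x a = fderiv ℝ g x (eE m a) := by
  rw [← toDual_gradient, InnerProductSpace.toDual_apply_apply, eE,
    EuclideanSpace.inner_single_right]
  simp

theorem norm_gradient_sq (g : E m → ℝ) (x : E m) :
    ‖gradient g x‖ ^ 2 = ∑ a, fderiv ℝ g x (eE m a) ^ 2 := by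
  simp [EuclideanSpace.real_norm_sq_eq, gradient_apply_eq_fderiv]

theorem latt_single (a : Fin m) : latt m (Pi.single a 1) = eE m a := by
  ext i
  by_cases h : i = a <;> simp [latt, eE, h]

theorem cube_eq_preimage : cube m = WithLp.ofLp ⁻¹' Icc (0 : Fin m → ℝ) 1 := by
  ext x
  simp [cube, Pi.le_def, forall_and]

theorem isCompact_cube : IsCompact (cube m) := by
  rw [cube_eq_preimage]
  exact (PiLp.continuousLinearEquiv 2 ℝ (fun _ : Fin m => ℝ)).toHomeomorph.isCompact_preimage.2
    isCompact_Icc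

theorem integral_cube_eq_integral_Icc (g : E m → ℝ) :
    ∫ x in cube m, g x = ∫ y in Icc (0 : Fin m → ℝ) 1, g (WithLp.toLp 2 y) := by
  rw [← (PiLp.volume_preserving_toLp (Fin m)).setIntegral_preimage_emb
    (MeasurableEquiv.toLp 2 (Fin m → ℝ)).measurableEmbedding, cube_eq_preimage]
  rfl

theorem integral_Icc_sum_fderiv_eq_zero_of_periodic {n : ℕ}
    {V : Fin n → (Fin n → ℝ) → ℝ} (hV : ∀ i, ContDiff ℝ 1 (V i))
    (hper : ∀ i y, V i (y + Pi.single i 1) = V i y) :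
    ∫ y in Icc (0 : Fin n → ℝ) 1, ∑ i, fderiv ℝ (V i) y (Pi.single i 1) = 0 := by
  cases n with
  | zero => simp
  | succ n =>
    have hdiff : ∀ i y, HasFDerivAt (V i) (fderiv ℝ (V i) y) y :=
      fun i y => ((hV i).differentiable one_ne_zero y).hasFDerivAt
    rw [integral_divergence_of_hasFDerivAt_off_countable' 0 1 zero_le_one V _ ∅ countable_empty
      (fun i => (hV i).continuous.continuousOn) (fun y _ i => hdiff i y)
      ((continuous_finsetSum _ fun i _ => ((hV i).continuous_fderiv one_ne_zero).clm_apply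
        continuous_const).integrableOn_Icc)]
    refine Finset.sum_eq_zero fun i _ => sub_eq_zero.2 (setIntegral_congr_fun measurableSet_Icc
      fun x _ => ?_)
    -- opposite faces of the cube differ by the period `Pi.single i 1`
    have hface : (i.insertNth 1 x : Fin (n + 1) → ℝ) = i.insertNth 0 x + Pi.single i 1 := by
      ext j
      refine Fin.succAboveCases i ?_ (fun _ => ?_) j <;> simp
    exact (congrArg (V i) hface).trans (hper i _)

theorem integral_cube_sum_fderiv_eq_zero_of_periodic {V : Fin m → E m → ℝ}
    (hV : ∀ i, ContDiff ℝ 1 (V i)) (hper : ∀ i x, V i (x + eE m i) = V i x) :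
    ∫ x in cube m, ∑ i, fderiv ℝ (V i) x (eE m i) = 0 := by
  let e := (PiLp.continuousLinearEquiv 2 ℝ (fun _ : Fin m => ℝ)).symm
  have hderiv : ∀ i y, fderiv ℝ (V i) (WithLp.toLp 2 y) (eE m i) =
      fderiv ℝ (V i ∘ e) y (Pi.single i 1) := by
    intro i y
    rw [e.comp_right_fderiv]
    rfl
  rw [integral_cube_eq_integral_Icc]
  simp only [hderiv]
  exact integral_Icc_sum_fderiv_eq_zero_of_periodic (fun i => (hV i).comp e.contDiff)
    fun i y => hper i (e y)

end Euclidean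

theorem hasDerivAt_setIntegral_of_continuous {X : Type*} [TopologicalSpace X] [T2Space X]
    [MeasurableSpace X] [OpensMeasurableSpace X] {μ : Measure X} [IsFiniteMeasureOnCompacts μ]
    {K : Set X} (hK : IsCompact K) {φ φ' : ℝ → X → ℝ}
    (hφ : Continuous (Function.uncurry φ)) (hφ' : Continuous (Function.uncurry φ'))
    (hderiv : ∀ t x, HasDerivAt (φ · x) (φ' t x) t) (t₀ : ℝ) :
    HasDerivAt (fun t => ∫ x in K, φ t x ∂μ) (∫ x in K, φ' t₀ x ∂μ) t₀ := by
  have hslice : ∀ {H : ℝ → X → ℝ}, Continuous (Function.uncurry H) → ∀ t, Continuous (H t) :=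
    fun hH t => hH.comp (continuous_const.prodMk continuous_id)
  obtain ⟨C, hC⟩ := (isCompact_Icc.prod hK).exists_bound_of_continuousOn
    (s := Icc (t₀ - 1) (t₀ + 1) ×ˢ K) hφ'.continuousOn
  refine (hasDerivAt_integral_of_dominated_loc_of_deriv_le (bound := fun _ => C)
    (Metric.ball_mem_nhds t₀ one_pos)
    (Filter.Eventually.of_forall fun t => (hslice hφ t).aestronglyMeasurable)
    ((hslice hφ t₀).continuousOn.integrableOn_compact hK)
    (hslice hφ' t₀).aestronglyMeasurable ?_
    (integrableOn_const hK.measure_lt_top.ne) (ae_of_all _ fun x t _ => hderiv t x)).2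
  refine (ae_restrict_iff' hK.measurableSet).2 (ae_of_all _ fun x hx t ht => hC (t, x) ⟨?_, hx⟩)
  rw [Metric.mem_ball, Real.dist_eq, abs_lt] at ht
  constructor <;> linarith [ht.1, ht.2]

/-- The pointwise identity `∂ₜ(|∇u|²/u) = div W - 2 |D²f|² u` in coordinates: `U = u`,
`p a = ∂ₐu`, `q a b = ∂ₐ∂_b u`, `c a b d = ∂ₐ∂_b∂_d u`. -/
theorem entropy_dissipation_identity {ι : Type*} [Fintype ι] {U : ℝ} (hU : U ≠ 0)
    (p : ι → ℝ) (q : ι → ι → ℝ) (c : ι → ι → ι → ℝ) (hc : ∀ a b, c a a b = c b a a) :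
    (∑ a, 2 * p a * ∑ b, c a b b) / U - (∑ a, p a ^ 2) * (∑ b, q b b) / U ^ 2 =
      ∑ a, (2 * (∑ b, (c a a b * p b + q a b * q a b)) / U
        - 2 * (∑ b, q a b * p b) * p a / U ^ 2
        - ((∑ b, 2 * p b * q a b) * p a + (∑ b, p b ^ 2) * q a a) / U ^ 2
        + 2 * (∑ b, p b ^ 2) * p a * p a / U ^ 3)
      - 2 * ((∑ a, ∑ b, (-q a b / U + p a * p b / U ^ 2) ^ 2) * U) := by
  -- termwise the two sides differ by `g a b - g b a`, whose double sum vanishes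
  set g : ι → ι → ℝ := fun a b => 2 * p a * c a b b / U - p a ^ 2 * q b b / U ^ 2
  have antisymm : ∑ a, ∑ b, (g a b - g b a) = 0 := by
    simp only [Finset.sum_sub_distrib]
    rw [Finset.sum_comm (f := fun a b => g b a), sub_self]
  rw [Finset.sum_mul_sum, ← sub_eq_zero, ← antisymm]
  simp only [Finset.mul_sum, Finset.sum_mul, Finset.sum_div, ← Finset.sum_sub_distrib,
    ← Finset.sum_add_distrib]
  refine Finset.sum_congr rfl fun a _ => Finset.sum_congr rfl fun b _ => ?_
  simp only [g, hc a b]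
  field_simp
  ring

section SpaceTime

variable {m : ℕ} {G : ℝ × E m → ℝ}

local notation "∂[" a "]" => dirDeriv ((0 : ℝ), eE _ a)
local notation "∂ₜ" => dirDeriv ((1 : ℝ), (0 : E _))

/-- `|∇f|² u` for `f = -log u`, written in terms of `u`. -/
def energyDensity (G : ℝ × E m → ℝ) (z : ℝ × E m) : ℝ := (∑ a, ∂[a] G z ^ 2) / G z

/-- The vector field `W` with `∂ₜ(|∇f|² u) = div W - 2 |D²f|² u` along the heat flow. -/
def entropyFlux (G : ℝ × E m → ℝ) (a : Fin m) (z : ℝ × E m) : ℝ :=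
  2 * (∑ b, ∂[a] (∂[b] G) z * ∂[b] G z) / G z - (∑ b, ∂[b] G z ^ 2) * ∂[a] G z / G z ^ 2

/-- `|D²f|² u` for `f = -log u`, written in terms of `u`. -/
def dissipationDensity (G : ℝ × E m → ℝ) (z : ℝ × E m) : ℝ :=
  (∑ a, ∑ b, (-∂[a] (∂[b] G) z / G z + ∂[a] G z * ∂[b] G z / G z ^ 2) ^ 2) * G z

theorem dissipationDensity_nonneg {z : ℝ × E m} (hz : 0 ≤ G z) : 0 ≤ dissipationDensity G z :=
  mul_nonneg (Finset.sum_nonneg fun _ _ => Finset.sum_nonneg fun _ _ => sq_nonneg _) hz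

theorem contDiff_energyDensity (hG : ContDiff ℝ ∞ G) (hG0 : ∀ z, G z ≠ 0) :
    ContDiff ℝ ∞ (energyDensity G) :=
  (ContDiff.sum fun _ _ => (contDiff_dirDeriv hG _).pow 2).div hG hG0

theorem contDiff_entropyFlux (hG : ContDiff ℝ ∞ G) (hG0 : ∀ z, G z ≠ 0) (a : Fin m) :
    ContDiff ℝ ∞ (entropyFlux G a) := by
  have hp := fun b => contDiff_dirDeriv hG ((0 : ℝ), eE m b)
  refine ((contDiff_const.mul (ContDiff.sum fun b _ => ?_)).div hG hG0).sub
    (((ContDiff.sum fun b _ => (hp b).pow 2).mul (hp a)).div (hG.pow 2)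
      fun z => pow_ne_zero 2 (hG0 z))
  exact (contDiff_dirDeriv (hp b) _).mul (hp b)

theorem continuous_dissipationDensity (hG : ContDiff ℝ ∞ G) (hG0 : ∀ z, G z ≠ 0) :
    Continuous (dissipationDensity G) := by
  have hp := fun b => (contDiff_dirDeriv hG ((0 : ℝ), eE m b)).continuous
  have hq := fun a b =>
    (contDiff_dirDeriv (contDiff_dirDeriv hG ((0 : ℝ), eE m b)) ((0 : ℝ), eE m a)).continuous
  refine (continuous_finsetSum _ fun a _ => continuous_finsetSum _ fun b _ => ?_).mul
    hG.continuous
  exact ((((hq a b).neg).div hG.continuous hG0).add (((hp a).mul (hp b)).div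
    (hG.continuous.pow 2) fun z => pow_ne_zero 2 (hG0 z))).pow 2

theorem dirDeriv_energyDensity (hG : ContDiff ℝ ∞ G) (hG0 : ∀ z, G z ≠ 0) (v z : ℝ × E m) :
    dirDeriv v (energyDensity G) z =
      (∑ a, 2 * ∂[a] G z * dirDeriv v (∂[a] G) z) / G z
        - (∑ a, ∂[a] G z ^ 2) * dirDeriv v G z / G z ^ 2 := by
  have hd : ∀ {H : ℝ × E m → ℝ}, ContDiff ℝ ∞ H → DifferentiableAt ℝ H z :=
    fun hH => (hH.differentiable (by simp)).differentiableAt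
  refine dirDeriv_eq_of_hasDerivAt_line (hd (contDiff_energyDensity hG hG0)) ?_
  have hS := HasDerivAt.fun_sum fun a (_ : a ∈ Finset.univ) =>
    (hasDerivAt_line_dirDeriv (hd (contDiff_dirDeriv hG ((0 : ℝ), eE m a))) v).fun_pow 2
  refine (hS.fun_div (hasDerivAt_line_dirDeriv (hd hG) v) (by simpa using hG0 z)).congr_deriv ?_
  have hz := hG0 z
  simp only [Nat.cast_ofNat, zero_smul, add_zero, Nat.add_one_sub_one, pow_one]
  field_simp

theorem dirDeriv_entropyFlux (hG : ContDiff ℝ ∞ G) (hG0 : ∀ z, G z ≠ 0) (a : Fin m)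
    (v z : ℝ × E m) :
    dirDeriv v (entropyFlux G a) z =
      2 * (∑ b, (dirDeriv v (∂[a] (∂[b] G)) z * ∂[b] G z
          + ∂[a] (∂[b] G) z * dirDeriv v (∂[b] G) z)) / G z
        - 2 * (∑ b, ∂[a] (∂[b] G) z * ∂[b] G z) * dirDeriv v G z / G z ^ 2
        - ((∑ b, 2 * ∂[b] G z * dirDeriv v (∂[b] G) z) * ∂[a] G z
          + (∑ b, ∂[b] G z ^ 2) * dirDeriv v (∂[a] G) z) / G z ^ 2
        + 2 * (∑ b, ∂[b] G z ^ 2) * ∂[a] G z * dirDeriv v G z / G z ^ 3 := by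
  have hd : ∀ {H : ℝ × E m → ℝ}, ContDiff ℝ ∞ H → DifferentiableAt ℝ H z :=
    fun hH => (hH.differentiable (by simp)).differentiableAt
  have hp := fun b => contDiff_dirDeriv hG ((0 : ℝ), eE m b)
  have line := fun {H : ℝ × E m → ℝ} (hH : ContDiff ℝ ∞ H) => hasDerivAt_line_dirDeriv (hd hH) v
  refine dirDeriv_eq_of_hasDerivAt_line (hd (contDiff_entropyFlux hG hG0 a)) ?_
  have hN := (HasDerivAt.fun_sum fun b (_ : b ∈ Finset.univ) =>
    (line (contDiff_dirDeriv (hp b) ((0 : ℝ), eE m a))).fun_mul (line (hp b))).const_mul 2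
  have hS := HasDerivAt.fun_sum fun b (_ : b ∈ Finset.univ) => (line (hp b)).fun_pow 2
  have hU0 : G (z + (0 : ℝ) • v) ≠ 0 := by simpa using hG0 z
  refine ((hN.fun_div (line hG) hU0).fun_sub ((hS.fun_mul (line (hp a))).fun_div
    ((line hG).fun_pow 2) (pow_ne_zero 2 hU0))).congr_deriv ?_
  have hz := hG0 z
  simp only [zero_smul, add_zero, Nat.cast_ofNat, Nat.add_one_sub_one, pow_one]
  field_simp
  ring

theorem entropyFlux_add_right_eq {c : ℝ × E m} (hc : ∀ y, G (y + c) = G y) (a : Fin m)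
    (y : ℝ × E m) : entropyFlux G a (y + c) = entropyFlux G a y := by
  have h1 := dirDeriv_add_right_eq hc
  have h2 := fun w => dirDeriv_add_right_eq (g := dirDeriv w G) (h1 w)
  simp only [entropyFlux, hc, h1, h2]

section HeatEquation

variable (hG : ContDiff ℝ ∞ G)
  (hheat : ∀ t x, deriv (fun s => G (s, x)) t = lapE m (fun y => G (t, y)) x)
include hG hheat

theorem timeDeriv_eq_sum (z : ℝ × E m) : ∂ₜ G z = ∑ b, ∂[b] (∂[b] G) z := by
  obtain ⟨t, x⟩ := z
  rw [← (hasDerivAt_time_slice (hG.differentiable (by simp)) t x).deriv, hheat, lapE]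
  exact Finset.sum_congr rfl fun b _ => iteratedFDeriv_two_slice hG t x _ _

theorem timeDeriv_spaceDeriv_eq_sum (a : Fin m) (z : ℝ × E m) :
    ∂ₜ (∂[a] G) z = ∑ b, ∂[a] (∂[b] (∂[b] G)) z := by
  rw [dirDeriv_comm hG, funext (timeDeriv_eq_sum hG hheat), dirDeriv_sum]
  exact fun b _ =>
    ((contDiff_dirDeriv (contDiff_dirDeriv hG _) _).differentiable (by simp)).differentiableAt

theorem timeDeriv_energyDensity (hG0 : ∀ z, G z ≠ 0) (z : ℝ × E m) :
    ∂ₜ (energyDensity G) z = ∑ a, ∂[a] (entropyFlux G a) z - 2 * dissipationDensity G z := by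
  have hc : ∀ a b, ∂[a] (∂[a] (∂[b] G)) z = ∂[b] (∂[a] (∂[a] G)) z := fun a b => by
    rw [show ∂[a] (∂[b] G) = ∂[b] (∂[a] G) from funext (dirDeriv_comm hG _ _),
      dirDeriv_comm (contDiff_dirDeriv hG _)]
  rw [dirDeriv_energyDensity hG hG0]
  simp only [dirDeriv_entropyFlux hG hG0, timeDeriv_spaceDeriv_eq_sum hG hheat,
    timeDeriv_eq_sum hG hheat]
  exact entropy_dissipation_identity (hG0 z) (fun a => ∂[a] G z) (fun a b => ∂[a] (∂[b] G) z)
    (fun a b d => ∂[a] (∂[b] (∂[d] G)) z) hc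

theorem hasDerivAt_integral_energyDensity (hG0 : ∀ z, G z ≠ 0)
    (hper : ∀ (a : Fin m) y, G (y + (0, eE m a)) = G y) (t : ℝ) :
    HasDerivAt (fun t => ∫ x in cube m, energyDensity G (t, x))
      (-2 * ∫ x in cube m, dissipationDensity G (t, x)) t := by
  have hslice : ∀ {H : ℝ × E m → ℝ}, ContDiff ℝ ∞ H → ContDiff ℝ ∞ (fun x => H (t, x)) :=
    fun hH => hH.comp (contDiff_const.prodMk contDiff_id)
  have hint : ∀ {φ : E m → ℝ}, Continuous φ → IntegrableOn φ (cube m) :=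
    fun hφ => hφ.continuousOn.integrableOn_compact isCompact_cube
  have hdiv : ∫ x in cube m, ∑ a, ∂[a] (entropyFlux G a) (t, x) = 0 := by
    have hflux := fun a => contDiff_entropyFlux hG hG0 a
    have hperiodic : ∀ a x, entropyFlux G a (t, x + eE m a) = entropyFlux G a (t, x) := by
      intro a x
      rw [show ((t, x + eE m a) : ℝ × E m) = (t, x) + (0, eE m a) by simp]
      exact entropyFlux_add_right_eq (hper a) a (t, x)
    simpa only [fderiv_slice_apply ((hflux _).differentiable (by simp))] using
      integral_cube_sum_fderiv_eq_zero_of_periodic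
        (fun a => (hslice (hflux a)).of_le (by decide)) hperiodic
  have hderiv : ∫ x in cube m, ∂ₜ (energyDensity G) (t, x) =
      -2 * ∫ x in cube m, dissipationDensity G (t, x) := by
    simp only [timeDeriv_energyDensity hG hheat hG0]
    rw [integral_sub, hdiv, integral_const_mul]
    · ring
    · exact hint (continuous_finsetSum _ fun a _ =>
        (contDiff_dirDeriv (contDiff_entropyFlux hG hG0 a) _).continuous.comp
          (continuous_const.prodMk continuous_id))
    · exact hint (continuous_const.mul ((continuous_dissipationDensity hG hG0).comp
        (continuous_const.prodMk continuous_id)))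
  rw [← hderiv]
  exact hasDerivAt_setIntegral_of_continuous (φ := fun s x => energyDensity G (s, x))
    (φ' := fun s x => ∂ₜ (energyDensity G) (s, x)) isCompact_cube
    (contDiff_energyDensity hG hG0).continuous
    (contDiff_dirDeriv (contDiff_energyDensity hG hG0) _).continuous
    (hasDerivAt_time_slice ((contDiff_energyDensity hG hG0).differentiable (by simp))) t

end HeatEquation

theorem norm_gradient_neg_log_sq_mul (hG : ContDiff ℝ ∞ G) (hG0 : ∀ z, G z ≠ 0)
    (t : ℝ) (x : E m) :
    ‖gradient (fun y => -Real.log (G (t, y))) x‖ ^ 2 * G (t, x) = energyDensity G (t, x) := by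
  have hL : Differentiable ℝ (fun z => -Real.log (G z)) :=
    ((hG.log hG0).neg).differentiable (by simp)
  simp only [norm_gradient_sq, fderiv_slice_apply hL,
    dirDeriv_neg_log ((hG.differentiable (by simp)) _) (hG0 _), energyDensity, div_pow, neg_sq,
    ← Finset.sum_div]
  field_simp [hG0 (t, x)]

theorem hessian_neg_log (hG : ContDiff ℝ ∞ G) (hG0 : ∀ z, G z ≠ 0) (t : ℝ) (x : E m)
    (a b : Fin m) :
    D2E m (fun y => -Real.log (G (t, y))) x (eE m a) (eE m b) =
      -∂[a] (∂[b] G) (t, x) / G (t, x) + ∂[a] G (t, x) * ∂[b] G (t, x) / G (t, x) ^ 2 := by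
  have hd : ∀ {H : ℝ × E m → ℝ}, ContDiff ℝ ∞ H → Differentiable ℝ H :=
    fun hH => hH.differentiable (by simp)
  rw [D2E, iteratedFDeriv_two_slice (hG.log hG0).neg,
    funext fun z => dirDeriv_neg_log (hd hG z) (hG0 z) ((0 : ℝ), eE m b),
    dirDeriv_neg_div (hd (contDiff_dirDeriv hG _) _) (hd hG _) (hG0 _)]
  ring

theorem sum_sq_hessian_neg_log_mul (hG : ContDiff ℝ ∞ G) (hG0 : ∀ z, G z ≠ 0) (t : ℝ) (x : E m) :
    (∑ a, ∑ b, D2E m (fun y => -Real.log (G (t, y))) x (eE m a) (eE m b) ^ 2) * G (t, x) =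
      dissipationDensity G (t, x) := by
  simp only [hessian_neg_log hG hG0]
  rfl

end SpaceTime

end HeatEntropy

open HeatEntropy in
/-- for a positive periodic solution of the heat equation the entropy
energy satisfies `E'(t) = −2∫ |∇²f|² u ≤ 0`; in particular `E` is non-increasing. -/
theorem energy_monotone (m : ℕ) (u : ℝ → E m → ℝ)
    (hu : ContDiff ℝ (⊤ : ℕ∞) (Function.uncurry u)) (hpos : ∀ t x, 0 < u t x)
    (hper : ∀ (t : ℝ) (x : E m) (k : Fin m → ℤ), u t (x + latt m k) = u t x)
    (hheat : ∀ t x, deriv (fun s => u s x) t = lapE m (u t) x)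
    (f : ℝ → E m → ℝ) (hf : f = fun t x => -Real.log (u t x))
    (Ent : ℝ → ℝ)
    (hE : Ent = fun t => ∫ x in cube m, ‖gradient (f t) x‖ ^ 2 * u t x) :
    (∀ t : ℝ,
      HasDerivAt Ent
        (-2 * ∫ x in cube m, (∑ a, ∑ b, (D2E m (f t) x (eE m a) (eE m b)) ^ 2) * u t x) t ∧
      -2 * (∫ x in cube m, (∑ a, ∑ b, (D2E m (f t) x (eE m a) (eE m b)) ^ 2) * u t x) ≤ 0) ∧
    Antitone Ent := by
  subst hf hE
  have hU0 : ∀ z, Function.uncurry u z ≠ 0 := fun z => (hpos z.1 z.2).ne'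
  have hperU : ∀ (a : Fin m) z, Function.uncurry u (z + (0, eE m a)) = Function.uncurry u z := by
    rintro a ⟨t, x⟩
    change u (t + 0) (x + eE m a) = u t x
    rw [add_zero, ← latt_single]
    exact hper t x _
  have hgrad : ∀ t x, ‖gradient (fun y => -Real.log (u t y)) x‖ ^ 2 * u t x =
      energyDensity (Function.uncurry u) (t, x) := fun t x => by
    simpa only [Function.uncurry_apply_pair] using norm_gradient_neg_log_sq_mul hu hU0 t x
  have hdiss : ∀ t x,
      (∑ a, ∑ b, D2E m (fun y => -Real.log (u t y)) x (eE m a) (eE m b) ^ 2) * u t x =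
        dissipationDensity (Function.uncurry u) (t, x) := fun t x => by
    simpa only [Function.uncurry_apply_pair] using sum_sq_hessian_neg_log_mul hu hU0 t x
  simp only [hgrad, hdiss]
  have hderiv := hasDerivAt_integral_energyDensity hu hheat hU0 hperU
  have hnonneg : ∀ t, 0 ≤ ∫ x in cube m, dissipationDensity (Function.uncurry u) (t, x) :=
    fun t => setIntegral_nonneg isCompact_cube.measurableSet
      fun x _ => dissipationDensity_nonneg (hpos t x).le
  refine ⟨fun t => ⟨hderiv t, by linarith [hnonneg t]⟩,
    antitone_of_deriv_nonpos (fun t => (hderiv t).differentiableAt) fun t => ?_⟩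
  rw [(hderiv t).deriv]
  linarith [hnonneg t]
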